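/- Let φ ∈ Out(G) be an automorphism admitting a train track representative f : T → T with primitive transition matrix. Then Lip(f) = Lip(T, T·φ) = min over S ∈ 𝒟 of Lip(S, S·φ). -/

import Mathlib

/-!
Common framework: metric `ℝ`-trees with isometric `G`-action, modelling the
geometric realizations of the simplicial metric `G`-trees of the cyclic
deformation space `𝒟` of a (non-solvable) GBS group `G`, together with the
Lipschitz metric, translation lengths, axes, train track representatives, etc.
-/

namespace GBSFormal

/-- A metric `ℝ`-tree (geodesic, 0-hyperbolic metric space) equipped with an
isometric action of `G`.  This models the geometric realization of a
simplicial metric `G`-tree. -/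
structure GTree (G : Type*) [Group G] where
  X : Type
  dist : X → X → ℝ
  dist_self : ∀ x, dist x x = 0
  eq_of_dist : ∀ x y, dist x y = 0 → x = y
  dist_comm : ∀ x y, dist x y = dist y x
  dist_triangle : ∀ x y z, dist x z ≤ dist x y + dist y z
  /-- the four-point condition: `X` is `0`-hyperbolic -/
  four_point : ∀ x y z w,
    dist x y + dist z w ≤ max (dist x z + dist y w) (dist x w + dist y z)
  /-- `X` is geodesic -/
  geodesic : ∀ x y, ∃ γ : ℝ → X, γ 0 = x ∧ γ (dist x y) = y ∧
    ∀ s t, 0 ≤ s → s ≤ dist x y → 0 ≤ t → t ≤ dist x y → dist (γ s) (γ t) = |s - t|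
  smul : G → X → X
  smul_one : ∀ x, smul 1 x = x
  smul_mul : ∀ g h x, smul (g * h) x = smul g (smul h x)
  /-- `G` acts by isometries -/
  isom : ∀ g x y, dist (smul g x) (smul g y) = dist x y

variable {G : Type*} [Group G]

namespace GTree

/-- The geodesic segment `[x,y]` in the tree `T`. -/
def seg (T : GTree G) (x y : T.X) : Set T.X :=
  {z | T.dist x z + T.dist z y = T.dist x y}

/-- The translation length `‖g‖_T`. -/
noncomputable def tl (T : GTree G) (g : G) : ℝ :=
  sInf (Set.range fun x => T.dist x (T.smul g x))

/-- `g` is loxodromic on `T`. -/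
def Loxodromic (T : GTree G) (g : G) : Prop := 0 < T.tl g

/-- The axis (characteristic set) of `g` in `T`. -/
noncomputable def axis (T : GTree G) (g : G) : Set T.X :=
  {x | T.dist x (T.smul g x) = T.tl g}

/-- The (pointwise) stabilizer of a point of `T`. -/
def stab (T : GTree G) (x : T.X) : Subgroup G where
  carrier := {g | T.smul g x = x}
  one_mem' := T.smul_one x
  mul_mem' := by
    intro a b (ha : _ = _) (hb : _ = _)
    show T.smul (a * b) x = x
    rw [T.smul_mul, hb, ha]
  inv_mem' := by
    intro a (ha : T.smul a x = x)
    show T.smul a⁻¹ x = x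
    calc T.smul a⁻¹ x = T.smul a⁻¹ (T.smul a x) := by rw [ha]
      _ = T.smul (a⁻¹ * a) x := (T.smul_mul _ _ _).symm
      _ = x := by rw [inv_mul_cancel, T.smul_one]

/-- The action of `G` on `T` is minimal: no proper nonempty invariant subtree. -/
def Minimal (T : GTree G) : Prop :=
  ∀ A : Set T.X, A.Nonempty → (∀ g, ∀ x ∈ A, T.smul g x ∈ A) →
    (∀ x ∈ A, ∀ y ∈ A, T.seg x y ⊆ A) → A = Set.univ

/-- Twisting the action by an automorphism `φ`: this is the tree `T · φ`,
i.e. `T` with marking precomposed with `φ`. -/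
def twist (T : GTree G) (φ : MulAut G) : GTree G :=
  { T with
    smul := fun g x => T.smul (φ g) x
    smul_one := by intro x; simp only [map_one]; exact T.smul_one x
    smul_mul := by intro g h x; simp only [map_mul]; exact T.smul_mul _ _ x
    isom := fun g x y => T.isom (φ g) x y }

end GTree

/-- A `G`-equivariant map between `G`-trees. -/
def Equivariant (T S : GTree G) (f : T.X → S.X) : Prop :=
  ∀ g x, f (T.smul g x) = S.smul g (f x)

/-- `f : T → S` is `K`-Lipschitz. -/
def LipWith (T S : GTree G) (K : ℝ) (f : T.X → S.X) : Prop :=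
  ∀ x y, S.dist (f x) (f y) ≤ K * T.dist x y

/-- The optimal Lipschitz constant `Lip(T,S)` among `G`-equivariant maps. -/
noncomputable def lipConst (T S : GTree G) : ℝ :=
  sInf {K | 0 ≤ K ∧ ∃ f : T.X → S.X, Equivariant T S f ∧ LipWith T S K f}

/-- An optimal map: a `G`-equivariant map realizing `Lip(T,S)`. -/
def IsOptimal (T S : GTree G) (f : T.X → S.X) : Prop :=
  Equivariant T S f ∧ LipWith T S (lipConst T S) f

/-- `f : T → S` is a `(K,C)`-quasi-isometry. -/
def QIsom (T S : GTree G) (K C : ℝ) (f : T.X → S.X) : Prop :=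
  ∀ x y, K⁻¹ * T.dist x y - C ≤ S.dist (f x) (f y) ∧
    S.dist (f x) (f y) ≤ K * T.dist x y + C

/-- An infinite cyclic group. -/
def InfiniteCyclic (H : Type*) [Group H] : Prop :=
  Nonempty (H ≃* Multiplicative ℤ)

/-- The Baumslag–Solitar relator of `BS(1,n) = ⟨a, t | t a t⁻¹ = aⁿ⟩`
(with `a = of false`, `t = of true`). -/
def bsRel (n : ℕ) : Set (FreeGroup Bool) :=
  {FreeGroup.of true * FreeGroup.of false * (FreeGroup.of true)⁻¹ *
    ((FreeGroup.of false) ^ n)⁻¹}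

/-- A solvable GBS group: a group isomorphic to `ℤ` or to some `BS(1,n)`. -/
def IsSolvableGBS (G : Type*) [Group G] : Prop :=
  Nonempty (G ≃* Multiplicative ℤ) ∨ ∃ n : ℕ, Nonempty (G ≃* PresentedGroup (bsRel n))

/-- The cyclic deformation space `𝒟` of a non-solvable GBS group `G`:
a family of minimal metric `G`-trees with infinite cyclic point stabilizers
and cobounded action, any two of which admit equivariant (Lipschitz) maps in
both directions (same elliptic subgroups); together with the covolume
`vol(T/G)`, the right action of automorphisms (twisting the marking) and the
family of cyclic factors of `G`. -/
structure DefSpace (G : Type*) [Group G] where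
  D : Type
  tr : D → GTree G
  minimal : ∀ T, (tr T).Minimal
  stab_ic : ∀ (T : D) (x : (tr T).X), InfiniteCyclic ((tr T).stab x)
  cobounded : ∀ T : D, ∃ (x : (tr T).X) (r : ℝ), ∀ y, ∃ g : G,
      (tr T).dist ((tr T).smul g x) y ≤ r
  vol : D → ℝ
  vol_pos : ∀ T, 0 < vol T
  maps_exist : ∀ T S : D, ∃ (K : ℝ) (f : (tr T).X → (tr S).X),
      0 ≤ K ∧ Equivariant (tr T) (tr S) f ∧ LipWith (tr T) (tr S) K f
  act : D → MulAut G → D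
  act_tr : ∀ T φ, tr (act T φ) = (tr T).twist φ
  cyclicFactor : Subgroup G → Prop
  nonsolvable : ¬ IsSolvableGBS G

namespace DefSpace

/-- The Lipschitz metric `d_Lip` on `𝒟`. -/
noncomputable def dLip (S : DefSpace G) (T T' : S.D) : ℝ :=
  Real.log (lipConst (S.tr T) (S.tr T') * S.vol T / S.vol T')

/-- `φ` is fully irreducible: no positive power of `φ` preserves the
conjugacy class of a cyclic factor of `G`. -/
def FullyIrr (S : DefSpace G) (φ : MulAut G) : Prop :=
  ∀ n : ℕ, 1 ≤ n → ∀ H : Subgroup G, S.cyclicFactor H →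
    ¬ ∃ g : G, Subgroup.map ((φ ^ n : MulAut G) : G ≃* G).toMonoidHom H
        = Subgroup.map ((MulAut.conj g : G ≃* G)).toMonoidHom H

/-- A geodesic line for the Lipschitz metric. -/
def IsGeodesicLine (S : DefSpace G) (L : ℝ → S.D) : Prop :=
  ∀ t s : ℝ, t < s → S.dLip (L t) (L s) = s - t

end DefSpace

/-- A train track representative of (the outer class of) the automorphism `φ`:
a `φ`-equivariant map `f : T → T` with uniform stretch factor `lam > 1` on
edges, admitting a legal segment (legality of a segment being characterized
metrically by exact stretching by `lam` under all iterates of `f`), with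
bounded-backtracking constant `bbt`. -/
structure TrainTrackRep (T : GTree G) (φ : MulAut G) where
  f : T.X → T.X
  lam : ℝ
  lam_gt_one : 1 < lam
  equivariant : ∀ g x, f (T.smul g x) = T.smul (φ g) (f x)
  lip : ∀ x y, T.dist (f x) (f y) ≤ lam * T.dist x y
  exists_legal : ∃ x y, x ≠ y ∧ ∀ n : ℕ,
      T.dist (f^[n] x) (f^[n] y) = lam ^ n * T.dist x y
  bbt : ℝ
  bbt_nonneg : 0 ≤ bbt
  bbt_spec : ∀ x y z, z ∈ T.seg x y →
      ∃ w ∈ T.seg (f x) (f y), T.dist (f z) w ≤ bbt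

namespace TrainTrackRep

variable {T : GTree G} {φ : MulAut G}

/-- The segment `[x,y]` is legal: all iterates of `f` stretch it exactly
by the stretch factor. -/
def LegalSeg (tt : TrainTrackRep T φ) (x y : T.X) : Prop :=
  ∀ n : ℕ, T.dist (tt.f^[n] x) (tt.f^[n] y) = tt.lam ^ n * T.dist x y

/-- The critical constant `C_f = 2·BBT(f)/(λ-1)`. -/
noncomputable def criticalConst (tt : TrainTrackRep T φ) : ℝ :=
  2 * tt.bbt / (tt.lam - 1)

/-- A periodic Nielsen path, recorded by its (distinct) endpoints: a
non-backtracking segment `η = [x,y]` with `g·[fⁿ(η)] = η` for some `g ∈ G`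
and `n ≥ 1`. -/
def IsPerNielsen (tt : TrainTrackRep T φ) (x y : T.X) : Prop :=
  x ≠ y ∧ ∃ (g : G) (n : ℕ), 1 ≤ n ∧
    T.smul g (tt.f^[n] x) = x ∧ T.smul g (tt.f^[n] y) = y

/-- A periodic indivisible Nielsen path (pINP): a periodic Nielsen path that is
not a non-backtracking concatenation of two periodic Nielsen paths. -/
def IsPINP (tt : TrainTrackRep T φ) (x y : T.X) : Prop :=
  tt.IsPerNielsen x y ∧
    ¬ ∃ z ∈ T.seg x y, z ≠ x ∧ z ≠ y ∧ tt.IsPerNielsen x z ∧ tt.IsPerNielsen z y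

/-- Metric form of primitivity of the transition matrix `A(f)`: iterated
images of any nondegenerate segment eventually meet every `G`-orbit. -/
def Primitive (tt : TrainTrackRep T φ) : Prop :=
  ∀ x y : T.X, x ≠ y → ∃ N : ℕ, ∀ n ≥ N, ∀ z : T.X, ∃ g : G,
    T.smul g z ∈ tt.f^[n] '' T.seg x y

end TrainTrackRep

/-- A path in `T`, parametrized by arc length on the interval `[a,b]`. -/
structure PathIn (T : GTree G) where
  a : ℝ
  b : ℝ
  le : a ≤ b
  map : ℝ → T.X
  lip : ∀ s t, a ≤ s → s ≤ t → t ≤ b → T.dist (map s) (map t) ≤ t - s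
  arclength : ∀ s, a ≤ s → s < b → ∃ ε > 0, ∀ t, s ≤ t → t ≤ min (s + ε) b →
      T.dist (map s) (map t) = t - s

end GBSFormal

namespace GBSFormal

/-!
The upper bound is witnessed by the train track map itself, which is `λ`-Lipschitz and
`φ`-equivariant. For the lower bound, let `h : S → S·φ` be equivariant and `K`-Lipschitz and
fix equivariant Lipschitz maps `p : T → S`, `q : S → T`. For each `n`, the maps `fⁿ` and
`q ∘ hⁿ ∘ p` from `T` to `T·φⁿ` are both equivariant, so by coboundedness of `T` they stay at
bounded distance. Iterates of a legal segment give arbitrarily long segments that `fⁿ`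
stretches by exactly `λⁿ`, whence `λⁿ ≤ Lip(q) Lip(p) Kⁿ` for every `n`, i.e. `λ ≤ K`.
-/

section

variable {G : Type*} [Group G]

namespace GTree

lemma dist_nonneg (T : GTree G) (x y : T.X) : 0 ≤ T.dist x y := by
  have h := T.dist_triangle x y x
  rw [T.dist_self, T.dist_comm y x] at h
  linarith

def Cobounded (T : GTree G) : Prop :=
  ∃ (x : T.X) (r : ℝ), ∀ y, ∃ g : G, T.dist (T.smul g x) y ≤ r

end GTree

variable {A B C : GTree G}

namespace Equivariant

lemma comp {F : A.X → B.X} {H : B.X → C.X} (hF : Equivariant A B F)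
    (hH : Equivariant B C H) : Equivariant A C (H ∘ F) :=
  fun g x => (congrArg H (hF g x)).trans (hH g (F x))

lemma twist {F : A.X → B.X} (hF : Equivariant A B F) (ψ : MulAut G) :
    Equivariant (A.twist ψ) (B.twist ψ) F :=
  fun g x => hF (ψ g) x

lemma iterate {φ : MulAut G} {F : A.X → A.X} (hF : Equivariant A (A.twist φ) F) (n : ℕ) :
    Equivariant A (A.twist (φ ^ n)) F^[n] := by
  induction n with
  | zero => intro g x; rfl
  | succ n ih =>
    intro g x
    change F^[n + 1] (A.smul g x) = A.smul ((φ ^ (n + 1)) g) (F^[n + 1] x)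
    rw [Function.iterate_succ_apply', Function.iterate_succ_apply', ih g x, pow_succ',
      MulAut.mul_apply]
    exact hF _ _

lemma exists_dist_le_of_cobounded (hA : A.Cobounded) {F₁ F₂ : A.X → B.X} {K₁ K₂ : ℝ}
    (h₁ : Equivariant A B F₁) (h₂ : Equivariant A B F₂)
    (hl₁ : LipWith A B K₁ F₁) (hl₂ : LipWith A B K₂ F₂) (hK₁ : 0 ≤ K₁) (hK₂ : 0 ≤ K₂) :
    ∃ C, ∀ z, B.dist (F₁ z) (F₂ z) ≤ C := by
  obtain ⟨x₀, r, hr⟩ := hA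
  refine ⟨K₁ * r + B.dist (F₁ x₀) (F₂ x₀) + K₂ * r, fun z => ?_⟩
  obtain ⟨g, hg⟩ := hr z
  have d₁ : B.dist (F₁ z) (F₁ (A.smul g x₀)) ≤ K₁ * r := by
    calc _ ≤ K₁ * A.dist z (A.smul g x₀) := hl₁ _ _
      _ ≤ K₁ * r := by rw [A.dist_comm]; gcongr
  have d₂ : B.dist (F₁ (A.smul g x₀)) (F₂ (A.smul g x₀)) = B.dist (F₁ x₀) (F₂ x₀) := by
    rw [h₁, h₂, B.isom]
  have d₃ : B.dist (F₂ (A.smul g x₀)) (F₂ z) ≤ K₂ * r :=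
    (hl₂ _ _).trans (by gcongr)
  linarith [B.dist_triangle (F₁ z) (F₁ (A.smul g x₀)) (F₂ z),
    B.dist_triangle (F₁ (A.smul g x₀)) (F₂ (A.smul g x₀)) (F₂ z)]

end Equivariant

namespace LipWith

lemma comp {F : A.X → B.X} {H : B.X → C.X} {K₁ K₂ : ℝ} (hF : LipWith A B K₁ F)
    (hH : LipWith B C K₂ H) (hK₂ : 0 ≤ K₂) : LipWith A C (K₂ * K₁) (H ∘ F) :=
  fun x y => calc
    C.dist (H (F x)) (H (F y)) ≤ K₂ * B.dist (F x) (F y) := hH _ _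
    _ ≤ K₂ * (K₁ * A.dist x y) := by gcongr; exact hF x y
    _ = K₂ * K₁ * A.dist x y := by ring

lemma iterate {F : A.X → A.X} {K : ℝ} (hF : LipWith A A K F) (hK : 0 ≤ K) (n : ℕ) :
    LipWith A A (K ^ n) F^[n] := by
  induction n with
  | zero => intro x y; simp
  | succ n ih =>
    rw [Function.iterate_succ', pow_succ']
    exact ih.comp hF hK

lemma le_of_dist_le_of_stretch {F F' : A.X → B.X} {c K C : ℝ} (hF' : LipWith A B K F')
    (hC : ∀ z, B.dist (F z) (F' z) ≤ C)
    (hF : ∀ D, ∃ u v, D ≤ A.dist u v ∧ B.dist (F u) (F v) = c * A.dist u v) : c ≤ K := by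
  by_contra! hKc
  obtain ⟨u, v, hD, huv⟩ := hF ((2 * C + 1) / (c - K))
  have hstretch : c * A.dist u v ≤ 2 * C + K * A.dist u v := by
    rw [← huv]
    linarith [B.dist_triangle (F u) (F' u) (F v), B.dist_triangle (F' u) (F' v) (F v),
      hC u, hC v, B.dist_comm (F' v) (F v), hF' u v]
  rw [div_le_iff₀ (sub_pos.2 hKc)] at hD
  linarith

end LipWith

lemma lipConst_le {f : A.X → B.X} {K : ℝ} (hK : 0 ≤ K) (hf : Equivariant A B f)
    (hfK : LipWith A B K f) : lipConst A B ≤ K :=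
  csInf_le ⟨0, fun _ hK => hK.1⟩ ⟨hK, f, hf, hfK⟩

lemma le_lipConst {c : ℝ}
    (hne : ∃ (K : ℝ) (f : A.X → B.X), 0 ≤ K ∧ Equivariant A B f ∧ LipWith A B K f)
    (h : ∀ (K : ℝ) (f : A.X → B.X), 0 ≤ K → Equivariant A B f → LipWith A B K f → c ≤ K) :
    c ≤ lipConst A B := by
  obtain ⟨K, f, hK, hf, hfK⟩ := hne
  exact le_csInf ⟨K, hK, f, hf, hfK⟩ fun K ⟨hK, f, hf, hfK⟩ => h K f hK hf hfK

lemma le_of_forall_pow_le_mul_pow {a b C : ℝ} (ha : 0 < a) (hb : 0 ≤ b)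
    (h : ∀ n : ℕ, a ^ n ≤ C * b ^ n) : a ≤ b := by
  by_contra! hba
  rcases hb.eq_or_lt with rfl | hb
  · linarith [h 1, pow_one a, zero_pow one_ne_zero (M₀ := ℝ)]
  · obtain ⟨n, hn⟩ := pow_unbounded_of_one_lt C ((one_lt_div hb).2 hba)
    rw [div_pow, lt_div_iff₀ (pow_pos hb n)] at hn
    linarith [h n]

namespace TrainTrackRep

variable {T U : GTree G} {φ : MulAut G} (tt : TrainTrackRep T φ)

lemma lam_pos : 0 < tt.lam := one_pos.trans tt.lam_gt_one

lemma exists_stretched_pair (n : ℕ) (D : ℝ) :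
    ∃ u v, D ≤ T.dist u v ∧ T.dist (tt.f^[n] u) (tt.f^[n] v) = tt.lam ^ n * T.dist u v := by
  obtain ⟨x, y, hxy, hleg⟩ := tt.exists_legal
  have hd : 0 < T.dist x y :=
    (T.dist_nonneg x y).lt_of_ne fun h => hxy (T.eq_of_dist x y h.symm)
  obtain ⟨m, hm⟩ := pow_unbounded_of_one_lt (D / T.dist x y) tt.lam_gt_one
  refine ⟨tt.f^[m] x, tt.f^[m] y, ?_, ?_⟩
  · rw [hleg m]
    exact ((div_lt_iff₀ hd).1 hm).le
  · rw [← Function.iterate_add_apply, ← Function.iterate_add_apply, hleg, hleg, pow_add,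
      mul_assoc]

lemma lam_le_of_lipWith (hT : T.Cobounded) {p : T.X → U.X} {q : U.X → T.X} {L M : ℝ}
    (hp : Equivariant T U p) (hpL : LipWith T U L p) (hL : 0 ≤ L)
    (hq : Equivariant U T q) (hqM : LipWith U T M q) (hM : 0 ≤ M)
    {h : U.X → U.X} {K : ℝ} (hh : Equivariant U (U.twist φ) h) (hhK : LipWith U U K h)
    (hK : 0 ≤ K) : tt.lam ≤ K := by
  refine le_of_forall_pow_le_mul_pow (C := M * L) tt.lam_pos hK fun n => ?_
  have hfn : Equivariant T (T.twist (φ ^ n)) tt.f^[n] :=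
    Equivariant.iterate (F := tt.f) tt.equivariant n
  have hgn : Equivariant T (T.twist (φ ^ n)) ((q ∘ h^[n]) ∘ p) :=
    hp.comp ((hh.iterate n).comp (hq.twist _))
  have hgL : LipWith T T (M * K ^ n * L) ((q ∘ h^[n]) ∘ p) :=
    hpL.comp ((hhK.iterate hK n).comp hqM hM) (by positivity)
  obtain ⟨C, hC⟩ := Equivariant.exists_dist_le_of_cobounded hT hfn hgn
    (LipWith.iterate (F := tt.f) tt.lip tt.lam_pos.le n) hgL (pow_nonneg tt.lam_pos.le n)
    (by positivity)
  calc tt.lam ^ n ≤ M * K ^ n * L :=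
        LipWith.le_of_dist_le_of_stretch hgL hC (tt.exists_stretched_pair n)
    _ = M * L * K ^ n := by ring

end TrainTrackRep

end

theorem stmt9_general {G : Type*} [Group G] (S : DefSpace G) (φ : MulAut G)
    (TT : S.D) (tt : TrainTrackRep (S.tr TT) φ) :
    tt.lam = lipConst (S.tr TT) ((S.tr TT).twist φ) ∧
    ∀ Sd : S.D, tt.lam ≤ lipConst (S.tr Sd) ((S.tr Sd).twist φ) := by
  have lower (Sd : S.D) : tt.lam ≤ lipConst (S.tr Sd) ((S.tr Sd).twist φ) := by
    obtain ⟨L, p, hL, hp, hpL⟩ := S.maps_exist TT Sd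
    obtain ⟨M, q, hM, hq, hqM⟩ := S.maps_exist Sd TT
    refine le_lipConst (S.act_tr Sd φ ▸ S.maps_exist Sd (S.act Sd φ)) fun K h hK hh hhK => ?_
    exact tt.lam_le_of_lipWith (S.cobounded TT) hp hpL hL hq hqM hM hh hhK hK
  exact ⟨(lower TT).antisymm (lipConst_le tt.lam_pos.le tt.equivariant tt.lip), lower⟩

/-- Let `φ ∈ Out(G)` have a train track representative `f : T → T` with primitive
transition matrix (expressed metrically: iterated images of any nondegenerate
segment eventually meet every `G`-orbit), `T ∈ 𝒟`.  Then
`Lip(f) = Lip(T, T·φ) = min_{S ∈ 𝒟} Lip(S, S·φ)`, where `Lip(f) = λ` is the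
stretch factor of `f` and `S·φ` denotes the tree `S` with action twisted
by `φ`. -/
theorem stmt9 {G : Type*} [Group G] (S : DefSpace G) (φ : MulAut G)
    (TT : S.D) (tt : TrainTrackRep (S.tr TT) φ) (hprim : tt.Primitive) :
    tt.lam = lipConst (S.tr TT) ((S.tr TT).twist φ) ∧
    ∀ Sd : S.D, tt.lam ≤ lipConst (S.tr Sd) ((S.tr Sd).twist φ) :=
  stmt9_general S φ TT tt

end GBSFormal
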